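/- arXiv:1601.02987 — 2 statements merged into one kernel-verified Lean document; each statement's English description precedes it below -/
import Mathlib

section
/- Suppose a beamforming codebook covers a total beamspace Ω̄ using K beams, each beam covering a contiguous interval of length Ω₀ = Ω̄/K, with worst-case gain P within its interval. Then for a beamformer f with ‖f‖₂ ≤ 1, the worst-case beamforming gain P satisfies P ≤ min(N_t, (2π/Ω̄)·K). -/
open BigOperators Real

/-!
The gain at `Ω` is `|F(Ω)|²` for the trigonometric polynomial `F(Ω) = ∑ₙ fₙ e^{-inΩ}`.
Cauchy–Schwarz bounds it pointwise by `N_t ‖f‖² ≤ N_t`, while Parseval on `[-π, π]` gives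
`∫ |F|² = 2π ‖f‖² ≤ 2π`; a gain of at least `P` on an interval of length `Ω₀ = Ω̄ / K` inside
`[-π, π]` therefore forces `P Ω₀ ≤ 2π`.
-/

open Complex ComplexConjugate MeasureTheory Function

theorem integral_exp_int_mul_I (k : ℤ) :
    ∫ Ω : ℝ in -π..π, exp (k * Ω * I) = if k = 0 then (2 * π : ℂ) else 0 := by
  split_ifs with hk
  · simp [hk]
    ring
  · have hc : (k : ℂ) * I ≠ 0 := by simp [hk, I_ne_zero]
    have hperiodic : exp (k * I * π) = exp (k * I * (-π : ℝ)) := by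
      calc exp (k * I * π) = exp (k * I * (-π : ℝ) + k * (2 * π * I)) := by
            push_cast; ring_nf
        _ = exp (k * I * (-π : ℝ)) := by rw [Complex.exp_add, exp_int_mul_two_pi_mul_I, mul_one]
    simp_rw [mul_right_comm _ _ I]
    rw [integral_exp_mul_complex hc, hperiodic, sub_self, zero_div]

theorem integral_norm_sq_sum_mul_exp {ι : Type*} [Fintype ι] (c : ι → ℂ) {k : ι → ℤ}
    (hk : Injective k) :
    ∫ Ω : ℝ in -π..π, ‖∑ i, c i * exp (k i * Ω * I)‖ ^ 2 = 2 * π * ∑ i, ‖c i‖ ^ 2 := by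
  have hexpand : ∀ Ω : ℝ, ((‖∑ i, c i * exp (k i * Ω * I)‖ ^ 2 : ℝ) : ℂ) =
      ∑ i, ∑ j, c i * conj (c j) * exp ((k i - k j : ℤ) * Ω * I) := by
    intro Ω
    rw [ofReal_pow, ← mul_conj', map_sum, Finset.sum_mul_sum]
    refine Finset.sum_congr rfl fun i _ => Finset.sum_congr rfl fun j _ => ?_
    rw [map_mul, ← exp_conj, mul_mul_mul_comm, ← Complex.exp_add]
    simp only [map_mul, conj_ofReal, conj_I, map_intCast]
    push_cast
    ring_nf
  have hdiag : ∀ i, ∫ Ω : ℝ in -π..π, ∑ j, c i * conj (c j) * exp ((k i - k j : ℤ) * Ω * I) =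
      2 * π * ‖c i‖ ^ 2 := by
    intro i
    classical
    rw [intervalIntegral.integral_finsetSum fun j _ =>
      Continuous.intervalIntegrable (by fun_prop) _ _]
    simp only [intervalIntegral.integral_const_mul, integral_exp_int_mul_I, sub_eq_zero, mul_ite,
      mul_zero, hk.eq_iff, Finset.sum_ite_eq, Finset.mem_univ, if_true, mul_conj']
    ring
  apply ofReal_injective
  rw [← intervalIntegral.integral_ofReal]
  simp_rw [hexpand]
  rw [intervalIntegral.integral_finsetSum fun i _ =>
    Continuous.intervalIntegrable (by fun_prop) _ _]
  simp_rw [hdiag]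
  push_cast
  rw [Finset.mul_sum]

theorem norm_sum_mul_sq_le {ι : Type*} [Fintype ι] (c u : ι → ℂ) (hu : ∀ i, ‖u i‖ ≤ 1) :
    ‖∑ i, c i * u i‖ ^ 2 ≤ Fintype.card ι * ∑ i, ‖c i‖ ^ 2 := by
  calc ‖∑ i, c i * u i‖ ^ 2 ≤ (∑ i, ‖c i‖) ^ 2 := by
        gcongr
        refine (norm_sum_le _ _).trans (Finset.sum_le_sum fun i _ => ?_)
        rw [norm_mul]
        exact mul_le_of_le_one_right (norm_nonneg _) (hu i)
    _ ≤ Fintype.card ι * ∑ i, ‖c i‖ ^ 2 := sq_sum_le_card_mul_sum_sq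

theorem mul_sub_le_integral_of_le_on {g : ℝ → ℝ} {P a b c d : ℝ} (hca : c ≤ a) (hab : a ≤ b)
    (hbd : b ≤ d) (hg : IntervalIntegrable g volume c d) (hg0 : ∀ x ∈ Set.Icc c d, 0 ≤ g x)
    (hP : ∀ x ∈ Set.Icc a b, P ≤ g x) :
    P * (b - a) ≤ ∫ x in c..d, g x := by
  calc P * (b - a) = ∫ _ in a..b, P := by simp [mul_comm]
    _ ≤ ∫ x in a..b, g x :=
        intervalIntegral.integral_mono_on hab intervalIntegrable_const
          (hg.mono_set (Set.uIcc_subset_uIcc (Set.mem_uIcc_of_le hca (hab.trans hbd))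
            (Set.mem_uIcc_of_le (hca.trans hab) hbd))) hP
    _ ≤ ∫ x in c..d, g x := by
        refine intervalIntegral.integral_mono_interval hca hab hbd ?_ hg
        exact (ae_restrict_mem measurableSet_Ioc).mono fun x hx =>
          hg0 x (Set.Ioc_subset_Icc_self hx)

/-- Tradeoff bound: if a codebook of `K` beams covers beamspace `Ω̄` with each
beam covering an interval of length `Ω₀ = Ω̄/K` with worst-case gain `P`, then
for a beamformer `f` with `‖f‖₂ ≤ 1`, `P ≤ min(Nt, (2π/Ω̄)·K)`. -/
theorem stmt17 (Nt K : ℕ) (hK : 0 < K) (f : Fin Nt → ℂ)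
    (hf : ∑ n, ‖f n‖^2 ≤ 1)
    (Ωbar Ω₀ P a : ℝ) (hΩbar : 0 < Ωbar) (hΩ₀ : Ω₀ = Ωbar / K)
    (hsub : Set.Icc a (a + Ω₀) ⊆ Set.Icc (-π) π)
    (hgain : ∀ Ω ∈ Set.Icc a (a + Ω₀),
      P ≤ ‖∑ n : Fin Nt, f n * Complex.exp (-(Ω * n) * Complex.I)‖^2) :
    P ≤ min (Nt : ℝ) ((2 * π / Ωbar) * K) := by
  set G : ℝ → ℝ := fun Ω => ‖∑ n : Fin Nt, f n * exp (-(Ω * n) * I)‖ ^ 2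
  have hG : ∀ Ω, G Ω = ‖∑ n : Fin Nt, f n * exp ((-n : ℤ) * Ω * I)‖ ^ 2 := fun Ω => by
    refine congrArg (‖·‖ ^ 2) (Finset.sum_congr rfl fun n _ => ?_)
    push_cast
    ring_nf
  have hΩ₀pos : 0 < Ω₀ := by rw [hΩ₀]; positivity
  have ha : a ∈ Set.Icc a (a + Ω₀) := Set.left_mem_Icc.2 (by linarith)
  have hb : a + Ω₀ ∈ Set.Icc a (a + Ω₀) := Set.right_mem_Icc.2 (by linarith)
  have hpointwise : P ≤ Nt := calc
    P ≤ G a := hgain a ha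
    _ ≤ Nt * ∑ n, ‖f n‖ ^ 2 := by
      simpa only [Fintype.card_fin] using
        norm_sum_mul_sq_le f (fun n => exp (-(a * n) * I)) fun n => by simp [norm_exp]
    _ ≤ Nt := mul_le_of_le_one_right (Nat.cast_nonneg _) hf
  have hparseval : P * Ω₀ ≤ 2 * π := calc
    P * Ω₀ = P * (a + Ω₀ - a) := by ring
    _ ≤ ∫ Ω in -π..π, G Ω :=
      mul_sub_le_integral_of_le_on (hsub ha).1 hb.1 (hsub hb).2
        (Continuous.intervalIntegrable (by fun_prop) _ _) (fun _ _ => by positivity) hgain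
    _ = 2 * π * ∑ n, ‖f n‖ ^ 2 := by
      simp_rw [hG]
      exact integral_norm_sq_sum_mul_exp f
        (neg_injective.comp (Nat.cast_injective.comp Fin.val_injective))
    _ ≤ 2 * π := mul_le_of_le_one_right (by positivity) hf
  refine le_min hpointwise ?_
  rw [hΩ₀, mul_div_assoc', div_le_iff₀ (Nat.cast_pos.2 hK)] at hparseval
  rwa [div_mul_eq_mul_div, le_div_iff₀ hΩbar]
end

section
/- Let R = Σ_{k=1}^K α_k α_k^* u(φ_k) u(φ_k)^H + σ² I be an N × N covariance matrix with K < N distinct steering vectors u(φ_k) that are linearly independent. Then the eigenspace of R corresponding to the eigenvalue σ² (the noise subspace) is exactly the orthogonal complement of span{u(φ_1), …, u(φ_K)}; consequently, for any direction φ, Σ_{n=K+1}^{N} |u(φ)^H q_n|² = 0 (where q_{K+1}, …, q_N form an orthonormal basis of the noise subspace) if and only if u(φ) ∈ span{u(φ_1), …, u(φ_K)}. -/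
open BigOperators Matrix

/-!
On the `σ²`-eigenspace the rank-one terms of `R` must cancel, which by linear independence of the
steering vectors forces `u_kᴴ x = 0` for every `k`. For the second part, `span q` is the orthogonal
complement of `U = span u`, so `w` is orthogonal to every `q_n` iff `w ∈ Uᗮᗮ = U`.
-/

section RankOnePerturbation

variable {K ι κ : Type*} [Field K] [Fintype ι] [Fintype κ]

theorem sum_smul_vecMulVec_mulVec (c : κ → K) (u v : κ → ι → K) (x : ι → K) :
    (∑ k, c k • vecMulVec (u k) (v k)) *ᵥ x = ∑ k, (c k * (v k ⬝ᵥ x)) • u k := by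
  simp only [sum_mulVec, smul_mulVec, vecMulVec_mulVec, op_smul_eq_smul, smul_smul]

theorem sum_smul_vecMulVec_add_smul_one_mulVec_eq_smul_iff [DecidableEq ι] {c : κ → K}
    (hc : ∀ k, c k ≠ 0) {u : κ → ι → K} (hu : LinearIndependent K u) (v : κ → ι → K) (s : K)
    (x : ι → K) :
    ((∑ k, c k • vecMulVec (u k) (v k)) + s • 1) *ᵥ x = s • x ↔ ∀ k, v k ⬝ᵥ x = 0 := by
  rw [add_mulVec, smul_mulVec, one_mulVec, sum_smul_vecMulVec_mulVec, add_eq_right]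
  constructor
  · intro h k
    exact (mul_eq_zero.mp (Fintype.linearIndependent_iff.mp hu _ h k)).resolve_left (hc k)
  · intro h
    simp [h]

end RankOnePerturbation

section Orthogonal

variable {𝕜 : Type*} [RCLike 𝕜]

theorem Submodule.mem_orthogonal_span_iff {E : Type*} [NormedAddCommGroup E]
    [InnerProductSpace 𝕜 E] (s : Set E) (x : E) :
    x ∈ (Submodule.span 𝕜 s)ᗮ ↔ ∀ v ∈ s, inner 𝕜 x v = 0 := by
  rw [← Submodule.span_singleton_le_iff_mem, ← Submodule.isOrtho_iff_le, Submodule.isOrtho_span]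
  simp

theorem forall_inner_eq_zero_iff_mem_of_span_eq_orthogonal {E : Type*} [NormedAddCommGroup E]
    [InnerProductSpace 𝕜 E] {U : Submodule 𝕜 E} [U.HasOrthogonalProjection] {s : Set E}
    (hs : Submodule.span 𝕜 s = Uᗮ) (w : E) :
    (∀ v ∈ s, inner 𝕜 w v = 0) ↔ w ∈ U := by
  rw [← U.orthogonal_orthogonal, ← hs, Submodule.mem_orthogonal_span_iff]

variable {ι κ μ : Type*}

theorem toLp_mem_span_range_iff (v : κ → ι → 𝕜) (x : ι → 𝕜) :
    WithLp.toLp 2 x ∈ Submodule.span 𝕜 (Set.range (WithLp.toLp 2 ∘ v)) ↔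
      x ∈ Submodule.span 𝕜 (Set.range v) := by
  let e := (WithLp.linearEquiv 2 𝕜 (ι → 𝕜)).symm
  have he : Submodule.span 𝕜 (Set.range (WithLp.toLp 2 ∘ v)) =
      (Submodule.span 𝕜 (Set.range v)).map (e : (ι → 𝕜) →ₗ[𝕜] EuclideanSpace 𝕜 ι) := by
    rw [Submodule.map_span, ← Set.range_comp]
    rfl
  rw [he, Submodule.mem_map_equiv]
  rfl

theorem star_dotProduct_eq_inner_toLp [Fintype ι] (x y : ι → 𝕜) :
    star x ⬝ᵥ y = inner 𝕜 (WithLp.toLp 2 x) (WithLp.toLp 2 y) := by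
  rw [EuclideanSpace.inner_toLp_toLp, dotProduct_comm]

theorem forall_star_dotProduct_eq_zero_iff_mem_span [Fintype ι] (u : κ → ι → 𝕜) (q : μ → ι → 𝕜)
    (hq : ∀ x, x ∈ Submodule.span 𝕜 (Set.range q) ↔ ∀ k, star (u k) ⬝ᵥ x = 0) (w : ι → 𝕜) :
    (∀ n, star w ⬝ᵥ q n = 0) ↔ w ∈ Submodule.span 𝕜 (Set.range u) := by
  have hs : Submodule.span 𝕜 (Set.range (WithLp.toLp 2 ∘ q)) =
      (Submodule.span 𝕜 (Set.range (WithLp.toLp 2 ∘ u)))ᗮ := by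
    ext x
    rw [← WithLp.toLp_ofLp (p := 2) x, toLp_mem_span_range_iff, hq,
      Submodule.mem_orthogonal_span_iff]
    simp only [Set.forall_mem_range, Function.comp_apply, star_dotProduct_eq_inner_toLp,
      inner_eq_zero_symm (x := WithLp.toLp 2 x.ofLp)]
  rw [← toLp_mem_span_range_iff, ← forall_inner_eq_zero_iff_mem_of_span_eq_orthogonal hs]
  simp [star_dotProduct_eq_inner_toLp]

end Orthogonal

theorem stmt18_general (N K : ℕ)
    (α : Fin K → ℂ) (hα : ∀ k, α k ≠ 0)
    (u : Fin K → Fin N → ℂ) (hu : LinearIndependent ℂ u)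
    (σ : ℝ)
    (R : Matrix (Fin N) (Fin N) ℂ)
    (hR : R = (∑ k : Fin K, (α k * star (α k)) •
        Matrix.vecMulVec (u k) (star (u k))) + ((σ^2 : ℝ) : ℂ) • (1 : Matrix (Fin N) (Fin N) ℂ))
    (q : Fin (N - K) → Fin N → ℂ)
    (hqspan : ∀ x : Fin N → ℂ,
      x ∈ Submodule.span ℂ (Set.range q) ↔ ∀ k, star (u k) ⬝ᵥ x = 0) :
    (∀ x : Fin N → ℂ,
      R.mulVec x = ((σ^2 : ℝ) : ℂ) • x ↔ ∀ k, star (u k) ⬝ᵥ x = 0) ∧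
    (∀ w : Fin N → ℂ,
      (∑ n, (‖star w ⬝ᵥ q n‖)^2 = 0) ↔
        w ∈ Submodule.span ℂ (Set.range u)) := by
  refine ⟨fun x => ?_, fun w => ?_⟩
  · subst hR
    exact sum_smul_vecMulVec_add_smul_one_mulVec_eq_smul_iff
      (fun k => mul_ne_zero (hα k) (star_ne_zero.mpr (hα k))) hu _ _ x
  · rw [← forall_star_dotProduct_eq_zero_iff_mem_span u q hqspan w,
      Finset.sum_eq_zero_iff_of_nonneg fun n _ => sq_nonneg _]
    simp

/-- Mathematical premise of MUSIC: for the ideal covariance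
`R = ∑ k |α_k|² u_k u_kᴴ + σ² I` with `K < N` linearly independent steering
vectors and nonzero gains, the `σ²`-eigenspace (noise subspace) is exactly the
orthogonal complement of `span{u_k}`; and with an orthonormal basis `q` of the
noise subspace, `∑ n |wᴴ q_n|² = 0` iff `w ∈ span{u_k}`. -/
theorem stmt18 (N K : ℕ) (hKN : K < N)
    (α : Fin K → ℂ) (hα : ∀ k, α k ≠ 0)
    (u : Fin K → Fin N → ℂ) (hu : LinearIndependent ℂ u)
    (σ : ℝ)
    (R : Matrix (Fin N) (Fin N) ℂ)
    (hR : R = (∑ k : Fin K, (α k * star (α k)) •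
        Matrix.vecMulVec (u k) (star (u k))) + ((σ^2 : ℝ) : ℂ) • (1 : Matrix (Fin N) (Fin N) ℂ))
    (q : Fin (N - K) → Fin N → ℂ)
    (hqorth : ∀ n m, star (q n) ⬝ᵥ q m = if n = m then 1 else 0)
    (hqspan : ∀ x : Fin N → ℂ,
      x ∈ Submodule.span ℂ (Set.range q) ↔ ∀ k, star (u k) ⬝ᵥ x = 0) :
    (∀ x : Fin N → ℂ,
      R.mulVec x = ((σ^2 : ℝ) : ℂ) • x ↔ ∀ k, star (u k) ⬝ᵥ x = 0) ∧
    (∀ w : Fin N → ℂ,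
      (∑ n, (‖star w ⬝ᵥ q n‖)^2 = 0) ↔
        w ∈ Submodule.span ℂ (Set.range u)) :=
  stmt18_general N K α hα u hu σ R hR q hqspan
end
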